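/- arXiv:2311.03779 — 3 statements merged into one kernel-verified Lean document; each statement's English description precedes it below -/
import Mathlib

section
/- Let $\Gamma \subset GL(n,\mathbb{R})$ be a semigroup of proximal matrices such that for all $A, B \in \Gamma$ one has $\Gamma v_B \cap E_A = \emptyset$. Then any $\Gamma$-invariant linear subspace $W \subseteq \mathbb{R}^n$ either is contained in $\bigcap_{A \in \Gamma} E_A$, or contains $v_A$ for every $A \in \Gamma$. -/
open Matrix Polynomial

/-- `A` is proximal with dominant (real) eigenvalue `lam`, dominant eigenvector `v`, and
`E` the sum of the complementary generalized eigenspaces. -/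
structure IsProximal {n : ℕ} (A : Matrix (Fin n) (Fin n) ℝ) (lam : ℝ)
    (v : Fin n → ℝ) (E : Submodule ℝ (Fin n → ℝ)) : Prop where
  ne_zero : v ≠ 0
  eigen : A.mulVec v = lam • v
  simple_root : (A.charpoly).rootMultiplicity lam = 1
  dominant : ∀ μ ∈ ((A.charpoly).map (algebraMap ℝ ℂ)).roots, μ ≠ (lam : ℂ) → ‖μ‖ < |lam|
  compl : IsCompl (Submodule.span ℝ {v}) E
  invariant : ∀ w ∈ E, A.mulVec w ∈ E

/-!
Let `χ` be the characteristic polynomial of `A` and `m` the multiplicity of its root `λ`. Then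
`q = χ / (X - λ)^m` has `q(λ) ≠ 0`, and by Cayley–Hamilton `(A - λ)^m q(A) = 0`, so `q(A)` kills
every `A`-invariant subspace that meets the generalized `λ`-eigenspace trivially. For proximal `A`
that eigenspace is the line through `v_A`, so `q(A)` is a nonzero multiple of the projection onto
`v_A` along `E_A`: an `A`-invariant `W ⊄ E_A` contains `v_A`. If this happens for one `A ∈ Γ`, then
`A v_A ∈ W` and `A v_A ∉ E_B`, so `v_B ∈ W` for every `B ∈ Γ`.
-/

open Module Module.End

namespace Module.End

variable {K V : Type*} [Field K] [AddCommGroup V] [Module K V] [FiniteDimensional K V]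
  {f : End K V} {μ : K} {v : V}

theorem maxGenEigenspace_eq_span_singleton (hμ : f.charpoly.rootMultiplicity μ = 1)
    (hv : v ≠ 0) (hfv : f v = μ • v) : f.maxGenEigenspace μ = K ∙ v := by
  have hle : (K ∙ v) ≤ f.maxGenEigenspace μ :=
    (Submodule.span_singleton_le_iff_mem _ _).2 <|
      eigenspace_le_maxGenEigenspace (mem_eigenspace_iff.2 hfv)
  refine (Submodule.eq_of_le_of_finrank_le hle ?_).symm
  rw [LinearMap.finrank_maxGenEigenspace_eq, hμ, finrank_span_singleton hv]

theorem aeval_divByMonic_rootMultiplicity_apply_eq_zero {E : Submodule K V}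
    (hE : E ∈ f.invtSubmodule) (hdisj : Disjoint E (f.maxGenEigenspace μ)) {e : V}
    (he : e ∈ E) :
    aeval f (f.charpoly /ₘ (X - C μ) ^ f.charpoly.rootMultiplicity μ) e = 0 := by
  set q := f.charpoly /ₘ (X - C μ) ^ f.charpoly.rootMultiplicity μ
  refine Submodule.disjoint_def.1 hdisj _ (aeval_apply_smul_mem_of_le_comap he q f hE) ?_
  refine (mem_maxGenEigenspace _ _ _).2 ⟨f.charpoly.rootMultiplicity μ, ?_⟩
  have hX : aeval f (X - C μ) = f - μ • 1 := by
    rw [map_sub, aeval_X, aeval_C, Algebra.algebraMap_eq_smul_one]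
  rw [← hX, ← map_pow, ← Module.End.mul_apply, ← map_mul,
    pow_mul_divByMonic_rootMultiplicity_eq, LinearMap.aeval_self_charpoly, LinearMap.zero_apply]

theorem mem_of_notMem_of_isCompl (hμ : f.charpoly.rootMultiplicity μ = 1) (hv : v ≠ 0)
    (hfv : f v = μ • v) {E : Submodule K V} (hE : E ∈ f.invtSubmodule)
    (hcompl : IsCompl (K ∙ v) E) {W : Submodule K V} (hW : W ∈ f.invtSubmodule)
    {w : V} (hwW : w ∈ W) (hwE : w ∉ E) : v ∈ W := by
  set q := f.charpoly /ₘ (X - C μ) ^ f.charpoly.rootMultiplicity μ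
  obtain ⟨y, hy, e, he, rfl⟩ :=
    Submodule.mem_sup.1 (hcompl.sup_eq_top ▸ Submodule.mem_top (x := w))
  obtain ⟨c, rfl⟩ := Submodule.mem_span_singleton.1 hy
  have hc : c ≠ 0 := by
    rintro rfl
    exact hwE (by simpa using he)
  have hq : q.eval μ ≠ 0 :=
    eval_divByMonic_pow_rootMultiplicity_ne_zero μ f.charpoly_monic.ne_zero
  have hdisj : Disjoint E (f.maxGenEigenspace μ) := by
    rw [maxGenEigenspace_eq_span_singleton hμ hv hfv]
    exact hcompl.disjoint.symm
  have hqw : aeval f q (c • v + e) = (c * q.eval μ) • v := by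
    rw [map_add, aeval_divByMonic_rootMultiplicity_apply_eq_zero hE hdisj he, add_zero, map_smul,
      aeval_apply_of_mem_apply_eq_smul hfv, smul_smul]
  have := aeval_apply_smul_mem_of_le_comap hwW q f hW
  rwa [hqw, Submodule.smul_mem_iff _ (mul_ne_zero hc hq)] at this

end Module.End

theorem IsProximal.mem_of_notMem {n : ℕ} {A : Matrix (Fin n) (Fin n) ℝ} {lam : ℝ}
    {v : Fin n → ℝ} {E W : Submodule ℝ (Fin n → ℝ)} (hA : IsProximal A lam v E)
    (hW : W.map A.mulVecLin ≤ W) {w : Fin n → ℝ} (hwW : w ∈ W) (hwE : w ∉ E) : v ∈ W :=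
  mem_of_notMem_of_isCompl (f := A.mulVecLin)
    (by rw [Matrix.charpoly_mulVecLin]; exact hA.simple_root) hA.ne_zero hA.eigen hA.invariant
    hA.compl ((mem_invtSubmodule_iff_map_le _).2 hW) hwW hwE

theorem invariant_subspace_dichotomy_general {n : ℕ}
    (S : Set (Matrix (Fin n) (Fin n) ℝ))
    (lam : Matrix (Fin n) (Fin n) ℝ → ℝ)
    (v : Matrix (Fin n) (Fin n) ℝ → (Fin n → ℝ))
    (E : Matrix (Fin n) (Fin n) ℝ → Submodule ℝ (Fin n → ℝ))
    (hprox : ∀ A ∈ S, IsProximal A (lam A) (v A) (E A))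
    (hdisj : ∀ A ∈ S, ∀ B ∈ S, ∀ C ∈ S, C.mulVec (v B) ∉ E A)
    (W : Submodule ℝ (Fin n → ℝ))
    (hW : ∀ A ∈ S, W.map A.mulVecLin ≤ W) :
    (∀ A ∈ S, W ≤ E A) ∨ (∀ A ∈ S, v A ∈ W) := by
  by_cases! h : ∀ A ∈ S, W ≤ E A
  · exact .inl h
  obtain ⟨A, hA, hWA⟩ := h
  obtain ⟨w, hwW, hwE⟩ := SetLike.not_le_iff_exists.1 hWA
  have hvA : v A ∈ W := (hprox A hA).mem_of_notMem (hW A hA) hwW hwE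
  have hAvA : A.mulVec (v A) ∈ W := hW A hA (Submodule.mem_map_of_mem hvA)
  exact .inr fun B hB => (hprox B hB).mem_of_notMem (hW B hB) hAvA (hdisj B hB A hA A hA)

/-- for a semigroup `Γ ⊆ GL(n,ℝ)` of proximal matrices with
`Γ v_B ∩ E_A = ∅` for all `A, B ∈ Γ`, any `Γ`-invariant subspace `W` either is contained in
`⋂_{A ∈ Γ} E_A` or contains `v_A` for every `A ∈ Γ`. -/
theorem invariant_subspace_dichotomy {n : ℕ}
    (S : Set (Matrix (Fin n) (Fin n) ℝ))
    (hmul : ∀ A ∈ S, ∀ B ∈ S, A * B ∈ S)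
    (hGL : ∀ A ∈ S, IsUnit A.det)
    (lam : Matrix (Fin n) (Fin n) ℝ → ℝ)
    (v : Matrix (Fin n) (Fin n) ℝ → (Fin n → ℝ))
    (E : Matrix (Fin n) (Fin n) ℝ → Submodule ℝ (Fin n → ℝ))
    (hprox : ∀ A ∈ S, IsProximal A (lam A) (v A) (E A))
    (hdisj : ∀ A ∈ S, ∀ B ∈ S, ∀ C ∈ S, C.mulVec (v B) ∉ E A)
    (W : Submodule ℝ (Fin n → ℝ))
    (hW : ∀ A ∈ S, W.map A.mulVecLin ≤ W) :
    (∀ A ∈ S, W ≤ E A) ∨ (∀ A ∈ S, v A ∈ W) :=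
  invariant_subspace_dichotomy_general S lam v E hprox hdisj W hW
end

section
/- Let $\Gamma \subset GL(n,\mathbb{R})$ be a semigroup of proximal matrices with $\Gamma v_B \cap E_A = \emptyset$ for all $A,B \in \Gamma$. Let $W_\Gamma = \sum_{A \in \Gamma} \mathbb{R}v_A$, let $U_\Gamma$ be a maximal proper $\Gamma$-invariant subspace of $W_\Gamma$, and set $V_\Gamma = W_\Gamma / U_\Gamma$. Then $\Gamma$ acts irreducibly on $V_\Gamma$, and every $A \in \Gamma$ acts on $V_\Gamma$ with the same dominant eigenvalue $\lambda_A$ as on $\mathbb{R}^n$: the image of $v_A$ in $V_\Gamma$ is nonzero and is an eigenvector of the induced map with eigenvalue $\lambda_A$. -/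
open Matrix Polynomial

/-!
If `v_A ∈ U` for some `A ∈ Γ`, then `A v_A ∈ U` and `A v_A ∉ E_B` for every `B ∈ Γ`. For a proximal
`B` and a `B`-invariant `U` containing some `w = c v_B + e ∉ E_B` (`e ∈ E_B`, `c ≠ 0`), apply
`q = χ_B / (X - λ_B)`: by Cayley–Hamilton `q(B) w` is a `λ_B`-eigenvector, and the eigenspace is the
line `ℝ v_B` since `λ_B` is a simple root of `χ_B`. Comparing components in `ℝ v_B ⊕ E_B` gives
`q(B) w = c q(λ_B) v_B` with `q(λ_B) ≠ 0`, so `v_B ∈ U`. Hence `U` would contain all of `W`.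
-/

namespace Module.End

variable {K V : Type*} [Field K] [AddCommGroup V] [Module K V] [FiniteDimensional K V]
  {f : End K V} {μ : K} {v : V}

lemma eigenspace_eq_span_singleton_of_rootMultiplicity_eq_one (hv : f.HasEigenvector μ v)
    (hμ : f.charpoly.rootMultiplicity μ = 1) : f.eigenspace μ = K ∙ v :=
  (Submodule.eq_of_le_of_finrank_le ((Submodule.span_singleton_le_iff_mem _ _).mpr hv.1)
    (by rw [finrank_span_singleton hv.2, ← hμ]; exact LinearMap.finrank_eigenspace_le f μ)).symm

lemma HasEigenvector.mem_of_mem_of_notMem_compl (hv : f.HasEigenvector μ v)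
    (hμ : f.charpoly.rootMultiplicity μ = 1) {E U : Submodule K V} (hvE : IsCompl (K ∙ v) E)
    (hE : E ∈ f.invtSubmodule) (hU : U ∈ f.invtSubmodule) {w : V} (hwU : w ∈ U) (hwE : w ∉ E) :
    v ∈ U := by
  obtain ⟨q, hχ, hqμ⟩ : ∃ q : K[X], (X - C μ) * q = f.charpoly ∧ q.eval μ ≠ 0 := by
    refine ⟨_, ?_,
      eval_divByMonic_pow_rootMultiplicity_ne_zero μ (LinearMap.charpoly_monic f).ne_zero⟩
    conv_rhs => rw [← pow_mul_divByMonic_rootMultiplicity_eq f.charpoly μ]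
    rw [hμ, pow_one]
  have hw : w ∈ (K ∙ v) ⊔ E := hvE.sup_eq_top ▸ Submodule.mem_top
  obtain ⟨_, hcv, e, he, rfl⟩ := Submodule.mem_sup.mp hw
  obtain ⟨c, rfl⟩ := Submodule.mem_span_singleton.mp hcv
  have hc : c ≠ 0 := by rintro rfl; simp_all
  set u := aeval f q (c • v + e) with hu_def
  have hu_eigen : u ∈ f.eigenspace μ := by
    have h0 := LinearMap.congr_fun (LinearMap.aeval_self_charpoly f) (c • v + e)
    rw [← hχ, map_mul, map_sub, aeval_X, aeval_C, mul_apply, LinearMap.sub_apply,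
      algebraMap_end_apply, LinearMap.zero_apply, sub_eq_zero] at h0
    exact mem_eigenspace_iff.mpr h0
  have hu : u = (c * q.eval μ) • v + aeval f q e := by
    rw [hu_def, map_add, map_smul, aeval_apply_of_mem_apply_eq_smul hv.apply_eq_smul, smul_smul]
  have hqe : aeval f q e = 0 := by
    refine Submodule.disjoint_def.mp hvE.disjoint _ ?_ (aeval_apply_smul_mem_of_le_comap he q f hE)
    rw [eq_sub_of_add_eq' hu.symm, ← eigenspace_eq_span_singleton_of_rootMultiplicity_eq_one hv hμ]
    exact Submodule.sub_mem _ hu_eigen (Submodule.smul_mem _ _ hv.1)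
  have huU : u ∈ U := aeval_apply_smul_mem_of_le_comap hwU q f hU
  rw [hu, hqe, add_zero] at huU
  exact (Submodule.smul_mem_iff _ (mul_ne_zero hc hqμ)).mp huU

end Module.End

lemma IsProximal.mem_of_mem_of_notMem {n : ℕ} {A : Matrix (Fin n) (Fin n) ℝ} {lam : ℝ}
    {v : Fin n → ℝ} {E : Submodule ℝ (Fin n → ℝ)} (h : IsProximal A lam v E)
    {U : Submodule ℝ (Fin n → ℝ)} (hU : U ∈ Module.End.invtSubmodule A.mulVecLin) {w : Fin n → ℝ}
    (hwU : w ∈ U) (hwE : w ∉ E) : v ∈ U :=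
  Module.End.HasEigenvector.mem_of_mem_of_notMem_compl (f := A.mulVecLin)
    ⟨Module.End.mem_eigenspace_iff.mpr h.eigen, h.ne_zero⟩
    (by rw [charpoly_mulVecLin]; exact h.simple_root) h.compl (fun x hx => h.invariant x hx)
    hU hwU hwE

theorem irreducible_on_quotient_general {n : ℕ}
    (S : Set (Matrix (Fin n) (Fin n) ℝ))
    (lam : Matrix (Fin n) (Fin n) ℝ → ℝ)
    (v : Matrix (Fin n) (Fin n) ℝ → (Fin n → ℝ))
    (E : Matrix (Fin n) (Fin n) ℝ → Submodule ℝ (Fin n → ℝ))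
    (hprox : ∀ A ∈ S, IsProximal A (lam A) (v A) (E A))
    (hdisj : ∀ A ∈ S, ∀ B ∈ S, ∀ C ∈ S, C.mulVec (v B) ∉ E A)
    (W U : Submodule ℝ (Fin n → ℝ))
    (hWdef : W = ⨆ A ∈ S, Submodule.span ℝ {v A})
    (hUlt : U < W)
    (hUinv : ∀ A ∈ S, U.map A.mulVecLin ≤ U)
    (hUmax : ∀ P : Submodule ℝ (Fin n → ℝ),
      P < W → (∀ A ∈ S, P.map A.mulVecLin ≤ P) → U ≤ P → P = U) :
    (∀ P : Submodule ℝ (Fin n → ℝ),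
        U ≤ P → P ≤ W → (∀ A ∈ S, P.map A.mulVecLin ≤ P) → P = U ∨ P = W) ∧
    (∀ A ∈ S, v A ∈ W ∧ v A ∉ U ∧ A.mulVec (v A) = lam A • v A) := by
  have hUinvt : ∀ A ∈ S, U ∈ Module.End.invtSubmodule A.mulVecLin := fun A hA =>
    (Module.End.mem_invtSubmodule_iff_map_le _).mpr (hUinv A hA)
  have hvW : ∀ A ∈ S, v A ∈ W := fun A hA =>
    hWdef ▸ Submodule.mem_iSup_of_mem A (Submodule.mem_iSup_of_mem hA
      (Submodule.mem_span_singleton_self (v A)))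
  have hvU : ∀ A ∈ S, v A ∉ U := by
    intro A hA hvA
    refine hUlt.not_ge (hWdef ▸ iSup₂_le fun B hB => ?_)
    rw [Submodule.span_singleton_le_iff_mem]
    exact (hprox B hB).mem_of_mem_of_notMem (hUinvt B hB) (hUinvt A hA hvA) (hdisj B hB A hA A hA)
  exact ⟨fun P hUP hPW hP => hPW.lt_or_eq.imp_left fun hPW => hUmax P hPW hP hUP,
    fun A hA => ⟨hvW A hA, hvU A hA, (hprox A hA).eigen⟩⟩

/-- let `W_Γ = Σ_{A ∈ Γ} ℝ v_A`, `U_Γ` a maximal proper `Γ`-invariant subspace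
of `W_Γ`, and `V_Γ = W_Γ / U_Γ`. Then `Γ` acts irreducibly on `V_Γ` (every `Γ`-invariant
subspace `P` with `U_Γ ≤ P ≤ W_Γ` equals `U_Γ` or `W_Γ`), and every `A ∈ Γ` acts on `V_Γ`
with the same dominant eigenvalue: the image of `v_A` in `V_Γ` is nonzero (i.e. `v_A ∉ U_Γ`)
and the eigenvector equation `A v_A = λ_A v_A` holds (so it descends to the quotient). -/
theorem irreducible_on_quotient {n : ℕ}
    (S : Set (Matrix (Fin n) (Fin n) ℝ))
    (hmul : ∀ A ∈ S, ∀ B ∈ S, A * B ∈ S)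
    (hGL : ∀ A ∈ S, IsUnit A.det)
    (lam : Matrix (Fin n) (Fin n) ℝ → ℝ)
    (v : Matrix (Fin n) (Fin n) ℝ → (Fin n → ℝ))
    (E : Matrix (Fin n) (Fin n) ℝ → Submodule ℝ (Fin n → ℝ))
    (hprox : ∀ A ∈ S, IsProximal A (lam A) (v A) (E A))
    (hdisj : ∀ A ∈ S, ∀ B ∈ S, ∀ C ∈ S, C.mulVec (v B) ∉ E A)
    (W U : Submodule ℝ (Fin n → ℝ))
    (hWdef : W = ⨆ A ∈ S, Submodule.span ℝ {v A})
    (hUlt : U < W)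
    (hUinv : ∀ A ∈ S, U.map A.mulVecLin ≤ U)
    (hUmax : ∀ P : Submodule ℝ (Fin n → ℝ),
      P < W → (∀ A ∈ S, P.map A.mulVecLin ≤ P) → U ≤ P → P = U) :
    (∀ P : Submodule ℝ (Fin n → ℝ),
        U ≤ P → P ≤ W → (∀ A ∈ S, P.map A.mulVecLin ≤ P) → P = U ∨ P = W) ∧
    (∀ A ∈ S, v A ∈ W ∧ v A ∉ U ∧ A.mulVec (v A) = lam A • v A) :=
  irreducible_on_quotient_general S lam v E hprox hdisj W U hWdef hUlt hUinv hUmax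
end

section
/- Let $(X, \mathcal{B}, m, (T_t)_{t \in \mathbb{R}})$ be a measure-preserving flow on a finite measure space and $\phi \in L^2(X,m)$ real-valued with $\int \phi\, dm = 0$. If there exists a sequence $t_n \to \infty$ such that $\phi \circ T_{t_n}$ does not converge weakly to $0$ in $L^2$, then there exist a sequence $s_n \to \infty$ and a non-constant $\chi \in L^2(X,m)$ with $\phi \circ T_{s_n} \rightharpoonup \chi$ and $\phi \circ T_{-s_n} \rightharpoonup \chi$ weakly in $L^2$. -/
/-!
The Koopman operators `f ↦ f ∘ T_t` form a one-parameter group of isometries `U_t` of `L²`, and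
weak sequential compactness of balls replaces the spectral theorem. Some subsequence `s_n` of
`t_n` gives `U_{s_n} φ ⇀ χ₀ ≠ 0` and `U_{-s_n} χ₀ ⇀ χ`; then `⟪χ, φ⟫ = ‖χ₀‖² > 0`, so `χ` is not
constant because `∫ φ = 0`. For `w = s_M - s_n`,
`⟪U_w φ, y⟫ = ⟪U_{s_M} φ, U_{s_n} y⟫ → ⟪χ₀, U_{s_n} y⟫ → ⟪χ, y⟫` as first `M` and then `n` tend
to infinity, and similarly for `U_{-w} φ` when `y = U_q φ`, because the `U_t` commute. A diagonal
choice of `M = M_n` handles the countably many `y = U_q φ`, `q` in the group generated by the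
`s_n`; they span a dense subspace of a closed invariant subspace containing every `U_{±w} φ` and
`χ`, and on its orthogonal complement all the inner products vanish.
-/

open MeasureTheory Filter Topology InnerProductSpace

section WeakConvergence

variable {E : Type*} [NormedAddCommGroup E] [InnerProductSpace ℝ E]

def WeakTendsto (x : ℕ → E) (ξ : E) : Prop :=
  ∀ y, Tendsto (fun n => ⟪x n, y⟫_ℝ) atTop (𝓝 ⟪ξ, y⟫_ℝ)

theorem WeakTendsto.comp_strictMono {x : ℕ → E} {ξ : E} (h : WeakTendsto x ξ) {σ : ℕ → ℕ}
    (hσ : StrictMono σ) : WeakTendsto (x ∘ σ) ξ :=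
  fun y => (h y).comp hσ.tendsto_atTop

theorem WeakTendsto.mem {x : ℕ → E} {ξ : E} (h : WeakTendsto x ξ) {K : Submodule ℝ E}
    [K.HasOrthogonalProjection] (hx : ∀ n, x n ∈ K) : ξ ∈ K := by
  rw [← K.orthogonal_orthogonal, Submodule.mem_orthogonal']
  intro u hu
  refine tendsto_nhds_unique (h u) ?_
  simp only [Submodule.inner_right_of_mem_orthogonal (hx _) hu, tendsto_const_nhds]

theorem isClosed_setOf_tendsto_inner {x : ℕ → E} {C : ℝ} (hC : ∀ n, ‖x n‖ ≤ C) (ξ : E) :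
    IsClosed {y | Tendsto (fun n => ⟪x n, y⟫_ℝ) atTop (𝓝 ⟪ξ, y⟫_ℝ)} := by
  refine Equicontinuous.isClosed_setOfPred_tendsto ?_ (continuous_const.inner continuous_id)
  refine (LipschitzWith.uniformEquicontinuous _ (Real.toNNReal C) fun n => ?_).equicontinuous
  refine LipschitzWith.of_dist_le_mul fun y z => ?_
  rw [dist_eq_norm, dist_eq_norm, ← inner_sub_right, Real.norm_eq_abs]
  exact (abs_real_inner_le_norm _ _).trans
    (mul_le_mul_of_nonneg_right ((hC n).trans (Real.le_coe_toNNReal C)) (norm_nonneg _))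

theorem weakTendsto_of_tendsto_inner {K : Submodule ℝ E} [K.HasOrthogonalProjection] {D : Set E}
    (hD : K ≤ (Submodule.span ℝ D).topologicalClosure) {x : ℕ → E} {ξ : E} {C : ℝ}
    (hC : ∀ n, ‖x n‖ ≤ C) (hx : ∀ n, x n ∈ K) (hξ : ξ ∈ K)
    (h : ∀ y ∈ D, Tendsto (fun n => ⟪x n, y⟫_ℝ) atTop (𝓝 ⟪ξ, y⟫_ℝ)) : WeakTendsto x ξ := by
  let S : Submodule ℝ E :=
    { carrier := {y | Tendsto (fun n => ⟪x n, y⟫_ℝ) atTop (𝓝 ⟪ξ, y⟫_ℝ)}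
      add_mem' := fun hy hz => by simpa only [Set.mem_ofPred_eq, inner_add_right] using hy.add hz
      zero_mem' := by simp only [Set.mem_ofPred_eq, inner_zero_right, tendsto_const_nhds]
      smul_mem' := fun c y hy => by
        simpa only [Set.mem_ofPred_eq, real_inner_smul_right] using hy.const_mul c }
  have hKS : K ≤ S := hD.trans <| Submodule.topologicalClosure_minimal _
    (Submodule.span_le.2 h) (isClosed_setOf_tendsto_inner hC ξ)
  have hKperpS : Kᗮ ≤ S := fun y hy =>
    show Tendsto (fun n => ⟪x n, y⟫_ℝ) atTop (𝓝 ⟪ξ, y⟫_ℝ) by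
      simp only [Submodule.inner_right_of_mem_orthogonal (hx _) hy,
        Submodule.inner_right_of_mem_orthogonal hξ hy, tendsto_const_nhds]
  intro y
  have hy : y ∈ K ⊔ Kᗮ := by
    rw [Submodule.sup_orthogonal_of_hasOrthogonalProjection]; exact Submodule.mem_top
  exact sup_le hKS hKperpS hy

theorem exists_weakTendsto_subseq [CompleteSpace E] {x : ℕ → E} {C : ℝ} (hC : ∀ n, ‖x n‖ ≤ C) :
    ∃ σ : ℕ → ℕ, StrictMono σ ∧ ∃ ξ, WeakTendsto (x ∘ σ) ξ := by
  set K := (Submodule.span ℝ (Set.range x)).topologicalClosure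
  have hxK : ∀ n, x n ∈ K := fun n =>
    Submodule.le_topologicalClosure _ (Submodule.subset_span ⟨n, rfl⟩)
  have : TopologicalSpace.SeparableSpace K :=
    ((Set.countable_range x).isSeparable.span.closure).separableSpace
  let ℓ : ℕ → WeakDual ℝ K := fun n => StrongDual.toWeakDual (toDual ℝ K ⟨x n, hxK n⟩)
  have hℓ : ∀ n, ℓ n ∈ WeakDual.toStrongDual ⁻¹' Metric.closedBall 0 C := fun n =>
    mem_closedBall_zero_iff.2 (((toDual ℝ K).norm_map _).trans_le (hC n))
  obtain ⟨L, -, σ, hσ, hL⟩ := WeakDual.isSeqCompact_closedBall ℝ K 0 C hℓ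
  refine ⟨σ, hσ, (toDual ℝ K).symm (WeakDual.toStrongDual L), ?_⟩
  refine weakTendsto_of_tendsto_inner (D := K)
    (by rw [Submodule.span_eq]; exact K.le_topologicalClosure) (fun n => hC _)
    (fun n => hxK _) (SetLike.coe_mem _) fun y hy => ?_
  have hlim : ⟪((toDual ℝ K).symm (WeakDual.toStrongDual L) : E), y⟫_ℝ = L ⟨y, hy⟩ :=
    toDual_symm_apply (x := (⟨y, hy⟩ : K))
  rw [hlim]
  exact ((WeakDual.eval_continuous (⟨y, hy⟩ : K)).tendsto L).comp hL

theorem exists_weakTendsto_subseq_ne_zero [CompleteSpace E] {x : ℕ → E} {C : ℝ}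
    (hC : ∀ n, ‖x n‖ ≤ C) {y : E} (h : ¬ Tendsto (fun n => ⟪x n, y⟫_ℝ) atTop (𝓝 0)) :
    ∃ σ : ℕ → ℕ, StrictMono σ ∧ ∃ ξ ≠ 0, WeakTendsto (x ∘ σ) ξ := by
  obtain ⟨V, hV, hfreq⟩ := not_tendsto_iff_exists_frequently_notMem.1 h
  obtain ⟨φ, hφ, hφV⟩ := extraction_of_frequently_atTop hfreq
  obtain ⟨σ, hσ, ξ, hξ⟩ := exists_weakTendsto_subseq (x := x ∘ φ) fun n => hC _
  refine ⟨φ ∘ σ, hφ.comp hσ, ξ, ?_, hξ⟩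
  rintro rfl
  obtain ⟨n, hn⟩ := ((hξ y).eventually (by rwa [inner_zero_left])).exists
  exact hφV (σ n) hn

end WeakConvergence

theorem AddSubgroup.countable_closure_range {G ι : Type*} [AddCommGroup G] [Countable ι]
    (f : ι → G) : (AddSubgroup.closure (Set.range f) : Set G).Countable :=
  (Set.countable_range fun a : ι →₀ ℤ => a.sum fun i n => n • f i).mono fun _ hx =>
    (AddSubgroup.mem_closure_range_iff.1 hx).imp fun _ ha => ha.symm

theorem exists_seq_tendsto_of_iterated_limit {X : Type*} [TopologicalSpace X]
    [TopologicalSpace.PseudoMetrizableSpace X] {F : ℕ → ℕ → X} {G : ℕ → X} {L : X}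
    (hF : ∀ n, Tendsto (F n) atTop (𝓝 (G n))) (hG : Tendsto G atTop (𝓝 L))
    {p : ℕ → ℕ → Prop} (hp : ∀ n, ∀ᶠ k in atTop, p n k) :
    ∃ M : ℕ → ℕ, (∀ n, p n (M n)) ∧ Tendsto (fun n => F n (M n)) atTop (𝓝 L) := by
  let := TopologicalSpace.pseudoMetrizableSpacePseudoMetric X
  have hM : ∀ n, ∃ k, p n k ∧ dist (F n k) (G n) ≤ 1 / (n + 1) := fun n =>
    (((hp n).and ((Metric.tendsto_nhds.1 (hF n)) _ Nat.one_div_pos_of_nat)).mono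
      fun _ h => ⟨h.1, h.2.le⟩).exists
  choose M hpM hdist using hM
  refine ⟨M, hpM, tendsto_iff_dist_tendsto_zero.2 ?_⟩
  refine squeeze_zero (fun _ => dist_nonneg) (fun n => dist_triangle _ (G n) _) ?_
  have hFG := squeeze_zero (fun _ => dist_nonneg) hdist tendsto_one_div_add_atTop_nhds_zero_nat
  simpa using hFG.add (tendsto_iff_dist_tendsto_zero.1 hG)

section OneParameterGroup

variable {E : Type*} [NormedAddCommGroup E] [InnerProductSpace ℝ E]

def IsOneParameterGroup (U : ℝ → E →ₗᵢ[ℝ] E) : Prop :=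
  ∀ u v x, U u (U v x) = U (u + v) x

def orbitClosure (U : ℝ → E →ₗᵢ[ℝ] E) (Q : AddSubgroup ℝ) (x : E) : Submodule ℝ E :=
  (Submodule.span ℝ ((fun q => U q x) '' Q)).topologicalClosure

instance [CompleteSpace E] (U : ℝ → E →ₗᵢ[ℝ] E) (Q : AddSubgroup ℝ) (x : E) :
    (orbitClosure U Q x).HasOrthogonalProjection := by
  unfold orbitClosure; infer_instance

theorem apply_mem_orbitClosure (U : ℝ → E →ₗᵢ[ℝ] E) {Q : AddSubgroup ℝ} (x : E) {q : ℝ}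
    (hq : q ∈ Q) : U q x ∈ orbitClosure U Q x :=
  Submodule.le_topologicalClosure _ (Submodule.subset_span ⟨q, hq, rfl⟩)

namespace IsOneParameterGroup

variable {U : ℝ → E →ₗᵢ[ℝ] E} (hU : IsOneParameterGroup U)
include hU

theorem zero_apply (x : E) : U 0 x = x :=
  (U 0).injective (by rw [hU, add_zero])

theorem apply_comm (a b : ℝ) (x : E) : U a (U b x) = U b (U a x) := by
  rw [hU, hU, add_comm]

theorem inner_apply_sub (a b : ℝ) (x y : E) : ⟪U (a - b) x, y⟫_ℝ = ⟪U a x, U b y⟫_ℝ := by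
  rw [← (U b).inner_map_map, hU, add_sub_cancel]

theorem inner_apply_neg (u : ℝ) (x y : E) : ⟪U (-u) x, y⟫_ℝ = ⟪x, U u y⟫_ℝ := by
  rw [← zero_sub, hU.inner_apply_sub, hU.zero_apply]

theorem weakTendsto_apply {x : ℕ → E} {ξ : E} (h : WeakTendsto x ξ) (u : ℝ) :
    WeakTendsto (fun n => U u (x n)) (U u ξ) := fun y => by
  simpa only [← hU.inner_apply_neg, neg_neg] using h (U (-u) y)

theorem apply_mem_orbitClosure_of_mem {Q : AddSubgroup ℝ} {x y : E} {q : ℝ} (hq : q ∈ Q)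
    (hy : y ∈ orbitClosure U Q x) : U q y ∈ orbitClosure U Q x := by
  have hspan : Submodule.span ℝ ((fun r => U r x) '' Q) ≤
      (orbitClosure U Q x).comap (U q).toLinearMap := by
    rw [Submodule.span_le]
    rintro _ ⟨r, hr, rfl⟩
    rw [SetLike.mem_coe, Submodule.mem_comap, LinearIsometry.coe_toLinearMap, hU]
    exact apply_mem_orbitClosure U x (Q.add_mem hq hr)
  exact Submodule.topologicalClosure_minimal _ hspan
    ((Submodule.isClosed_topologicalClosure _).preimage (U q).continuous) hy

theorem exists_tendsto_inner_apply_sub {s : ℕ → ℝ} (hs : Tendsto s atTop atTop) {x χ₀ χ : E}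
    (hχ₀ : WeakTendsto (fun n => U (s n) x) χ₀) (hχ : WeakTendsto (fun n => U (-s n) χ₀) χ)
    {S : Set ℝ} (hS : S.Countable) :
    ∃ M : ℕ → ℕ, (∀ n : ℕ, (n : ℝ) ≤ s (M n) - s n) ∧ ∀ q ∈ S,
      Tendsto (fun n => ⟪U (s (M n) - s n) x, U q x⟫_ℝ) atTop (𝓝 ⟪χ, U q x⟫_ℝ) ∧
      Tendsto (fun n => ⟪U (-(s (M n) - s n)) x, U q x⟫_ℝ) atTop (𝓝 ⟪χ, U q x⟫_ℝ) := by
  have := hS.to_subtype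
  -- the second coordinate below first tends to `⟪U (s n) x, U q χ₀⟫`, whose limit is `⟪U q χ₀, χ₀⟫`
  have hχq : ∀ q, ⟪χ, U q x⟫_ℝ = ⟪U q χ₀, χ₀⟫_ℝ := fun q => by
    refine tendsto_nhds_unique (hχ _) (((hU.weakTendsto_apply hχ₀ q) χ₀).congr fun n => ?_)
    rw [hU.inner_apply_neg, hU.apply_comm, real_inner_comm]
  obtain ⟨M, hM, hlim⟩ := exists_seq_tendsto_of_iterated_limit (X := S → ℝ × ℝ)
    (F := fun n k q => (⟪U (s k - s n) x, U q x⟫_ℝ, ⟪U (-(s k - s n)) x, U q x⟫_ℝ))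
    (G := fun n q => (⟪U (-s n) χ₀, U q x⟫_ℝ, ⟪U (s n) x, U q χ₀⟫_ℝ))
    (L := fun q => (⟪χ, U q x⟫_ℝ, ⟪χ, U q x⟫_ℝ))
    (fun n => tendsto_pi_nhds.2 fun q => by
      refine Tendsto.prodMk_nhds ?_ ?_
      · simp only [hU.inner_apply_sub, hU.inner_apply_neg]
        exact hχ₀ _
      · simp only [neg_sub, hU.inner_apply_sub, hU.apply_comm _ q]
        simpa only [real_inner_comm (U (s n) x)] using hU.weakTendsto_apply hχ₀ q (U (s n) x))
    (tendsto_pi_nhds.2 fun q => by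
      refine Tendsto.prodMk_nhds (hχ _) ?_
      rw [hχq, real_inner_comm]
      exact hχ₀ _)
    (p := fun n k => (n : ℝ) ≤ s k - s n)
    (fun n => (hs.eventually_ge_atTop (n + s n)).mono fun _ h => by linarith)
  refine ⟨M, hM, fun q hq => ?_⟩
  have := tendsto_pi_nhds.1 hlim ⟨q, hq⟩
  exact ⟨(continuous_fst.tendsto _).comp this, (continuous_snd.tendsto _).comp this⟩

variable [CompleteSpace E]

theorem exists_weakTendsto_apply_and_apply_neg_of_weakTendsto {s : ℕ → ℝ}
    (hs : Tendsto s atTop atTop) {x χ₀ χ : E} (hχ₀ : WeakTendsto (fun n => U (s n) x) χ₀)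
    (hχ : WeakTendsto (fun n => U (-s n) χ₀) χ) :
    ∃ w : ℕ → ℝ, Tendsto w atTop atTop ∧
      WeakTendsto (fun n => U (w n) x) χ ∧ WeakTendsto (fun n => U (-w n) x) χ := by
  set Q := AddSubgroup.closure (Set.range s)
  have hsQ : ∀ n, s n ∈ Q := fun n => AddSubgroup.subset_closure ⟨n, rfl⟩
  have hχ₀K : χ₀ ∈ orbitClosure U Q x := hχ₀.mem fun n => apply_mem_orbitClosure U x (hsQ n)
  have hχK : χ ∈ orbitClosure U Q x :=
    hχ.mem fun n => hU.apply_mem_orbitClosure_of_mem (Q.neg_mem (hsQ n)) hχ₀K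
  obtain ⟨M, hM, hlim⟩ :=
    hU.exists_tendsto_inner_apply_sub hs hχ₀ hχ (AddSubgroup.countable_closure_range s)
  have hwQ : ∀ n, s (M n) - s n ∈ Q := fun n => Q.sub_mem (hsQ _) (hsQ _)
  have hD : ∀ {v : ℕ → ℝ}, (∀ n, v n ∈ Q) →
      (∀ q ∈ Q, Tendsto (fun n => ⟪U (v n) x, U q x⟫_ℝ) atTop (𝓝 ⟪χ, U q x⟫_ℝ)) →
      WeakTendsto (fun n => U (v n) x) χ := fun hvQ hv =>
    weakTendsto_of_tendsto_inner le_rfl (fun n => ((U _).norm_map x).le)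
      (fun n => apply_mem_orbitClosure U x (hvQ n)) hχK (by rintro _ ⟨q, hq, rfl⟩; exact hv q hq)
  exact ⟨fun n => s (M n) - s n, tendsto_atTop_mono hM tendsto_natCast_atTop_atTop,
    hD hwQ fun q hq => (hlim q hq).1, hD (fun n => Q.neg_mem (hwQ n)) fun q hq => (hlim q hq).2⟩

theorem exists_weakTendsto_apply_and_apply_neg {t : ℕ → ℝ} (ht : Tendsto t atTop atTop)
    {x ψ : E} (h : ¬ Tendsto (fun n => ⟪U (t n) x, ψ⟫_ℝ) atTop (𝓝 0)) :
    ∃ s : ℕ → ℝ, Tendsto s atTop atTop ∧ ∃ χ, 0 < ⟪χ, x⟫_ℝ ∧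
      WeakTendsto (fun n => U (s n) x) χ ∧ WeakTendsto (fun n => U (-s n) x) χ := by
  obtain ⟨σ, hσ, χ₀, hχ₀0, hχ₀⟩ :=
    exists_weakTendsto_subseq_ne_zero (fun n => ((U (t n)).norm_map x).le) h
  obtain ⟨τ, hτ, χ, hχ⟩ :=
    exists_weakTendsto_subseq (fun n => ((U (-t (σ n))).norm_map χ₀).le)
  have hχ₀' : WeakTendsto (fun n => U (t (σ (τ n))) x) χ₀ := hχ₀.comp_strictMono hτ
  have hs : Tendsto (fun n => t (σ (τ n))) atTop atTop :=
    ht.comp (hσ.comp hτ).tendsto_atTop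
  have hχx : ⟪χ, x⟫_ℝ = ‖χ₀‖ ^ 2 := by
    refine tendsto_nhds_unique (hχ x) ?_
    rw [← real_inner_self_eq_norm_sq]
    exact (hχ₀' χ₀).congr fun n => by
      rw [Function.comp_apply, hU.inner_apply_neg, real_inner_comm]
  obtain ⟨w, hw, hfwd, hbwd⟩ :=
    hU.exists_weakTendsto_apply_and_apply_neg_of_weakTendsto hs hχ₀' hχ
  exact ⟨w, hw, χ, by rw [hχx]; positivity, hfwd, hbwd⟩

end IsOneParameterGroup

end OneParameterGroup

section Koopman

variable {X : Type*} [MeasurableSpace X] {m : Measure X}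

def koopman (T : ℝ → X → X) (hT : ∀ t, MeasurePreserving (T t) m m) (u : ℝ) :
    Lp ℝ 2 m →ₗᵢ[ℝ] Lp ℝ 2 m :=
  Lp.compMeasurePreservingₗᵢ ℝ (T u) (hT u)

theorem isOneParameterGroup_koopman {T : ℝ → X → X} (hT : ∀ t, MeasurePreserving (T t) m m)
    (hflow : ∀ s t x, T (s + t) x = T s (T t x)) : IsOneParameterGroup (koopman T hT) := by
  intro u v f
  change Lp.compMeasurePreserving (T u) (hT u) (Lp.compMeasurePreserving (T v) (hT v) f) =
    Lp.compMeasurePreserving (T (u + v)) (hT (u + v)) f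
  rw [← Lp.compMeasurePreserving_comp_apply]
  congr 2
  exact funext fun x => by rw [add_comm, hflow, Function.comp_apply]

theorem integral_mul_eq_inner (f g : Lp ℝ 2 m) : ∫ x, f x * g x ∂m = ⟪f, g⟫_ℝ := by
  simp only [L2.inner_def, Real.inner_apply]

theorem integral_mul_eq_inner_toLp (f : Lp ℝ 2 m) {ψ : X → ℝ} (hψ : MemLp ψ 2 m) :
    ∫ x, f x * ψ x ∂m = ⟪f, hψ.toLp ψ⟫_ℝ := by
  rw [← integral_mul_eq_inner]
  exact integral_congr_ae (EventuallyEq.rfl.mul hψ.coeFn_toLp.symm)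

theorem integral_comp_mul_eq_inner {T : ℝ → X → X} (hT : ∀ t, MeasurePreserving (T t) m m)
    {φ ψ : X → ℝ} (hφ : MemLp φ 2 m) (hψ : MemLp ψ 2 m) (u : ℝ) :
    ∫ x, φ (T u x) * ψ x ∂m = ⟪koopman T hT u (hφ.toLp φ), hψ.toLp ψ⟫_ℝ := by
  rw [← integral_mul_eq_inner_toLp]
  refine integral_congr_ae (EventuallyEq.mul ?_ EventuallyEq.rfl)
  exact ((Lp.coeFn_compMeasurePreserving _ (hT u)).trans
    ((hT u).quasiMeasurePreserving.ae_eq_comp hφ.coeFn_toLp)).symm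

theorem not_ae_eq_const_of_inner_ne_zero (χ : Lp ℝ 2 m) {φ : X → ℝ} (hφ : MemLp φ 2 m)
    (hzero : ∫ x, φ x ∂m = 0) (h : ⟪χ, hφ.toLp φ⟫_ℝ ≠ 0) : ¬ ∃ c : ℝ, χ =ᵐ[m] fun _ => c := by
  rintro ⟨c, hc⟩
  refine h ?_
  calc ⟪χ, hφ.toLp φ⟫_ℝ = ∫ x, c * φ x ∂m := by
        rw [← integral_mul_eq_inner_toLp]
        exact integral_congr_ae (hc.mul EventuallyEq.rfl)
    _ = 0 := by rw [integral_const_mul, hzero, mul_zero]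

end Koopman

theorem babillot_weak_limit_general
    {X : Type*} [MeasurableSpace X] (m : Measure X)
    (T : ℝ → X → X)
    (hTmp : ∀ t, MeasurePreserving (T t) m m)
    (hflow : ∀ s t x, T (s + t) x = T s (T t x))
    (φ : X → ℝ) (hφ : MemLp φ 2 m) (hzero : ∫ x, φ x ∂m = 0)
    (t : ℕ → ℝ) (ht : Tendsto t atTop atTop)
    (hnot : ¬ ∀ ψ : X → ℝ, MemLp ψ 2 m →
      Tendsto (fun n => ∫ x, φ (T (t n) x) * ψ x ∂m) atTop (nhds 0)) :
    ∃ s : ℕ → ℝ, Tendsto s atTop atTop ∧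
      ∃ χ : X → ℝ, MemLp χ 2 m ∧ (¬ ∃ c : ℝ, χ =ᵐ[m] fun _ => c) ∧
        ∀ ψ : X → ℝ, MemLp ψ 2 m →
          Tendsto (fun n => ∫ x, φ (T (s n) x) * ψ x ∂m) atTop
            (nhds (∫ x, χ x * ψ x ∂m)) ∧
          Tendsto (fun n => ∫ x, φ (T (-(s n)) x) * ψ x ∂m) atTop
            (nhds (∫ x, χ x * ψ x ∂m)) := by
  obtain ⟨ψ₀, hψ₀, hψ₀not⟩ := not_forall₂.1 hnot
  simp only [integral_comp_mul_eq_inner hTmp hφ hψ₀] at hψ₀not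
  obtain ⟨s, hs, χ, hχφ, hfwd, hbwd⟩ :=
    (isOneParameterGroup_koopman hTmp hflow).exists_weakTendsto_apply_and_apply_neg ht hψ₀not
  refine ⟨s, hs, χ, Lp.memLp χ, not_ae_eq_const_of_inner_ne_zero χ hφ hzero hχφ.ne', ?_⟩
  intro ψ hψ
  simp only [integral_comp_mul_eq_inner hTmp hφ hψ, integral_mul_eq_inner_toLp χ hψ]
  exact ⟨hfwd _, hbwd _⟩

/-- Babillot's Lemma 1: for a measure-preserving flow `(T_t)` on a finite
measure space and a real `φ ∈ L²` with `∫ φ dm = 0`, if there is a sequence `t_n → ∞` with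
`φ ∘ T_{t_n}` not converging weakly to `0` in `L²`, then there is a sequence `s_n → ∞` and a
non-constant `χ ∈ L²` with `φ ∘ T_{s_n} ⇀ χ` and `φ ∘ T_{-s_n} ⇀ χ` weakly in `L²`. -/
theorem babillot_weak_limit
    {X : Type*} [MeasurableSpace X] (m : Measure X) [IsFiniteMeasure m]
    (T : ℝ → X → X)
    (hTmp : ∀ t, MeasurePreserving (T t) m m)
    (hflow : ∀ s t x, T (s + t) x = T s (T t x))
    (hT0 : ∀ x, T 0 x = x)
    (φ : X → ℝ) (hφ : MemLp φ 2 m) (hzero : ∫ x, φ x ∂m = 0)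
    (t : ℕ → ℝ) (ht : Tendsto t atTop atTop)
    (hnot : ¬ ∀ ψ : X → ℝ, MemLp ψ 2 m →
      Tendsto (fun n => ∫ x, φ (T (t n) x) * ψ x ∂m) atTop (nhds 0)) :
    ∃ s : ℕ → ℝ, Tendsto s atTop atTop ∧
      ∃ χ : X → ℝ, MemLp χ 2 m ∧ (¬ ∃ c : ℝ, χ =ᵐ[m] fun _ => c) ∧
        ∀ ψ : X → ℝ, MemLp ψ 2 m →
          Tendsto (fun n => ∫ x, φ (T (s n) x) * ψ x ∂m) atTop
            (nhds (∫ x, χ x * ψ x ∂m)) ∧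
          Tendsto (fun n => ∫ x, φ (T (-(s n)) x) * ψ x ∂m) atTop
            (nhds (∫ x, χ x * ψ x ∂m)) :=
  babillot_weak_limit_general m T hTmp hflow φ hφ hzero t ht hnot
end
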